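/- Let a = (aᵢ)_{i∈ℤ} be a bilateral sequence of i.i.d. random variables with common distribution μ supported on [q] = {1,…,q}, and set κ = max_{x∈[q]} μ({x}). Let F₀ be the σ-field generated by the random variables T^{(k)}f = 2·1(a has a local maximum at index k) for k ≥ 0, and let G_{<−n} be the σ-field generated by {aᵢ : i < −n}. Then for any event A ∈ F₀ and any event B ∈ G_{<−n} with positive probability, |Prob(A | B) − Prob(A)| ≤ 2q·κⁿ. -/

import Mathlib

/-!
Let `E` be the event that `a` is constant on `[-n, 0]`; by independence,
`P(E) ≤ ∑ₓ μ{x}ⁿ⁺¹ ≤ κⁿ`. Off `E`, a local maximum at some `k ≥ 0` cannot start its plateau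
left of `-n`, so it is decided by the coordinates `≥ -n`: every `A ∈ F₀` agrees off `E` with an
event `A'` of `G_{≥-n}`, which is independent of `G_{<-n}`. Hence `P(A ∩ B)` is within `P(E) P(B)`
of `P(A') P(B)` and `P(A)` within `P(E)` of `P(A')`, so `|P(A | B) - P(A)| ≤ 2 P(E) ≤ 2κⁿ`.
-/

open MeasureTheory ProbabilityTheory Filter Finset

noncomputable section

attribute [local instance] Classical.propDecidable

/-- A bilateral sequence `x : ℤ → Fin q` has a local maximum at the index `k`
if for some `j < k`, `x j < x (j+1) = ⋯ = x k > x (k+1)`. -/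
def HasLocalMaxZ {q : ℕ} (x : ℤ → Fin q) (k : ℤ) : Prop :=
  ∃ j < k, x j < x k ∧ (∀ i : ℤ, j < i → i ≤ k → x i = x k) ∧ x (k + 1) < x k

/-- `T^{(k)}f (a) = 2·1(a has a local maximum at index k)`. -/
def Tf {q : ℕ} {Ω : Type*} (a : ℤ → Ω → Fin q) (k : ℤ) (ω : Ω) : ℝ :=
  if HasLocalMaxZ (fun i => a i ω) k then 2 else 0

/-- The σ-field `F₀ = F_{≥0}` generated by the random variables `T^{(k)}f`, `k ≥ 0`. -/
def Fge0 {q : ℕ} {Ω : Type*} (a : ℤ → Ω → Fin q) : MeasurableSpace Ω :=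
  ⨆ k : ℕ, MeasurableSpace.comap (Tf a k) inferInstance

/-- The σ-field `G_{<−n}` generated by the random variables `aᵢ`, `i < −n`. -/
def Glt {q : ℕ} {Ω : Type*} (a : ℤ → Ω → Fin q) (n : ℕ) : MeasurableSpace Ω :=
  ⨆ i : ℤ, ⨆ _ : i < -(n : ℤ), MeasurableSpace.comap (a i) inferInstance

section

variable {Ω : Type*} [MeasurableSpace Ω] {P : Measure Ω} [IsFiniteMeasure P]

lemma abs_measureReal_sub_le_of_sdiff_eq {A A' E : Set Ω} (h : A \ E = A' \ E) :
    |P.real A - P.real A'| ≤ P.real E := by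
  have subset_union {s t : Set Ω} (hst : s \ E = t \ E) : s ⊆ t ∪ E := by
    intro x hx
    by_cases hxE : x ∈ E
    · exact Or.inr hxE
    · have hxt : x ∈ t \ E := hst ▸ ⟨hx, hxE⟩
      exact Or.inl hxt.1
  rw [abs_sub_le_iff]
  constructor
  · linarith [measureReal_mono (μ := P) (subset_union h), measureReal_union_le (μ := P) A' E]
  · linarith [measureReal_mono (μ := P) (subset_union h.symm), measureReal_union_le (μ := P) A E]

lemma abs_measureReal_inter_div_sub_le {A A' E B : Set Ω} (hAA' : A \ E = A' \ E)
    (hA'B : P.real (A' ∩ B) = P.real A' * P.real B) (hEB : P.real (E ∩ B) = P.real E * P.real B)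
    (hB : 0 < P.real B) :
    |P.real (A ∩ B) / P.real B - P.real A| ≤ 2 * P.real E := by
  have hAB : |P.real (A ∩ B) - P.real A' * P.real B| ≤ P.real E * P.real B := by
    rw [← hA'B, ← hEB]
    refine abs_measureReal_sub_le_of_sdiff_eq ?_
    ext x
    have hx := congrArg (x ∈ ·) hAA'
    simp only [Set.mem_sdiff, Set.mem_inter_iff, eq_iff_iff] at hx ⊢
    tauto
  have hA := abs_measureReal_sub_le_of_sdiff_eq (P := P) hAA'
  calc |P.real (A ∩ B) / P.real B - P.real A|
      = |(P.real (A ∩ B) - P.real A' * P.real B) / P.real B + (P.real A' - P.real A)| := by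
        congr 1; field_simp; ring
    _ ≤ |P.real (A ∩ B) - P.real A' * P.real B| / P.real B + |P.real A - P.real A'| := by
        rw [abs_sub_comm (P.real A), ← abs_of_pos hB, ← abs_div, abs_of_pos hB]
        exact abs_add_le _ _
    _ ≤ 2 * P.real E := by
        have := div_le_of_le_mul₀ hB.le (by positivity) hAB
        linarith

end

lemma exists_measurableSet_iSup_comap_sdiff_eq {Ω ι β : Type*} [MeasurableSpace β]
    {f g : ι → Ω → β} {E : Set Ω} (hfg : ∀ i, ∀ ω ∉ E, f i ω = g i ω) {A : Set Ω}
    (hA : MeasurableSet[⨆ i, MeasurableSpace.comap (f i) inferInstance] A) :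
    ∃ A', MeasurableSet[⨆ i, MeasurableSpace.comap (g i) inferInstance] A' ∧ A \ E = A' \ E := by
  have trace_eq : (⨆ i, MeasurableSpace.comap (f i) inferInstance).comap ((↑) : (Eᶜ : Set Ω) → Ω)
      = (⨆ i, MeasurableSpace.comap (g i) inferInstance).comap ((↑) : (Eᶜ : Set Ω) → Ω) := by
    simp only [MeasurableSpace.comap_iSup, MeasurableSpace.comap_comp]
    congr! 3 with i
    exact funext fun ω => hfg i ω ω.2
  have hA_trace : MeasurableSet[(⨆ i, MeasurableSpace.comap (f i) inferInstance).comap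
      ((↑) : (Eᶜ : Set Ω) → Ω)] (((↑) : (Eᶜ : Set Ω) → Ω) ⁻¹' A) := ⟨A, hA, rfl⟩
  rw [trace_eq] at hA_trace
  obtain ⟨A', hA', hpre⟩ := hA_trace
  refine ⟨A', hA', ?_⟩
  rw [Subtype.preimage_coe_eq_preimage_coe_iff] at hpre
  rw [Set.sdiff_eq, Set.sdiff_eq, Set.inter_comm, ← hpre, Set.inter_comm]

lemma HasLocalMaxZ.of_eqOn {q : ℕ} {x y : ℤ → Fin q} {N k : ℤ} (hk : 0 ≤ k)
    (hxy : ∀ i, N ≤ i → x i = y i) (hx : ∃ i, N ≤ i ∧ i ≤ 0 ∧ x i ≠ x 0)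
    (h : HasLocalMaxZ x k) : HasLocalMaxZ y k := by
  obtain ⟨j, hjk, hjlt, hrun, hk1⟩ := h
  have hNj : N ≤ j := by
    -- otherwise the plateau `(j, k]` contains `[N, 0]`
    by_contra! hjN
    obtain ⟨i, hNi, hi0, hne⟩ := hx
    exact hne ((hrun i (by omega) (by omega)).trans (hrun 0 (by omega) hk).symm)
  refine ⟨j, hjk, ?_, fun i hji hik => ?_, ?_⟩
  · rwa [← hxy j hNj, ← hxy k (by omega)]
  · rw [← hxy i (by omega), ← hxy k (by omega), hrun i hji hik]
  · rwa [← hxy (k + 1) (by omega), ← hxy k (by omega)]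

lemma hasLocalMaxZ_iff_of_eqOn {q : ℕ} {x y : ℤ → Fin q} {N k : ℤ} (hk : 0 ≤ k)
    (hxy : ∀ i, N ≤ i → x i = y i) (hx : ∃ i, N ≤ i ∧ i ≤ 0 ∧ x i ≠ x 0) :
    HasLocalMaxZ x k ↔ HasLocalMaxZ y k := by
  have hN : N ≤ 0 := by obtain ⟨i, hNi, hi0, -⟩ := hx; omega
  have hy : ∃ i, N ≤ i ∧ i ≤ 0 ∧ y i ≠ y 0 := by
    obtain ⟨i, hNi, hi0, hne⟩ := hx
    exact ⟨i, hNi, hi0, by rwa [← hxy i hNi, ← hxy 0 hN]⟩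
  exact ⟨HasLocalMaxZ.of_eqOn hk hxy hx,
    HasLocalMaxZ.of_eqOn hk (fun i hi => (hxy i hi).symm) hy⟩

lemma measurableSet_hasLocalMaxZ {q : ℕ} (k : ℤ) :
    MeasurableSet {x : ℤ → Fin q | HasLocalMaxZ x k} := by
  simp only [HasLocalMaxZ, Set.ofPred_exists, Set.ofPred_and, Set.ofPred_forall]
  measurability

lemma measurable_Tf {q : ℕ} {Ω : Type*} {m : MeasurableSpace Ω} {a : ℤ → Ω → Fin q}
    (ha : ∀ i, Measurable[m] (a i)) (k : ℤ) : Measurable[m] (Tf a k) :=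
  Measurable.ite (measurable_pi_lambda _ ha (measurableSet_hasLocalMaxZ k)) measurable_const
    measurable_const

lemma Fge0_le {q : ℕ} {Ω : Type*} {m : MeasurableSpace Ω} {a : ℤ → Ω → Fin q}
    (ha : ∀ i, Measurable[m] (a i)) : Fge0 a ≤ m :=
  iSup_le fun k => (measurable_Tf ha k).comap_le

section

variable {α : Type*} [Fintype α] [MeasurableSpace α] [MeasurableSingletonClass α]

lemma sum_measureReal_singleton_pow_succ_le (μ : Measure α) [IsProbabilityMeasure μ] (m : ℕ) :
    ∑ x, μ.real {x} ^ (m + 1) ≤ (⨆ x, μ.real {x}) ^ m := by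
  have le_sup (x : α) : μ.real {x} ≤ ⨆ y, μ.real {y} :=
    le_ciSup (f := fun y => μ.real {y}) (Set.finite_range _).bddAbove x
  calc ∑ x, μ.real {x} ^ (m + 1) ≤ ∑ x, (⨆ y, μ.real {y}) ^ m * μ.real {x} := by
        gcongr with x
        rw [pow_succ]
        gcongr
        exact le_sup x
    _ = (⨆ y, μ.real {y}) ^ m := by
        rw [← Finset.mul_sum, sum_measureReal_singleton, Finset.coe_univ, probReal_univ, mul_one]

lemma measureReal_iUnion_iInter_preimage_singleton_le {Ω ι : Type*} [MeasurableSpace Ω]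
    {P : Measure Ω} {μ : Measure α} [IsProbabilityMeasure μ] {a : ι → Ω → α}
    (hmeas : ∀ i, Measurable (a i)) (hindep : iIndepFun a P) (hid : ∀ i, P.map (a i) = μ)
    {s : Finset ι} {m : ℕ} (hs : s.card = m + 1) :
    P.real (⋃ x, ⋂ i ∈ s, a i ⁻¹' {x}) ≤ (⨆ x, μ.real {x}) ^ m := by
  have inter_eq (x : α) : P.real (⋂ i ∈ s, a i ⁻¹' {x}) = μ.real {x} ^ (m + 1) := by
    rw [measureReal_def, hindep.measure_inter_preimage_eq_mul s (sets := fun _ => {x})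
      (fun _ _ => measurableSet_singleton x), ENNReal.toReal_prod, ← hs, ← Finset.prod_const]
    refine Finset.prod_congr rfl fun i _ => ?_
    rw [← measureReal_def, ← map_measureReal_apply (hmeas i) (measurableSet_singleton x), hid]
  calc P.real (⋃ x, ⋂ i ∈ s, a i ⁻¹' {x}) ≤ ∑ x, P.real (⋂ i ∈ s, a i ⁻¹' {x}) :=
        measureReal_iUnion_fintype_le _
    _ = ∑ x, μ.real {x} ^ (m + 1) := by simp only [inter_eq]
    _ ≤ (⨆ x, μ.real {x}) ^ m := sum_measureReal_singleton_pow_succ_le μ m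

end

section

variable {q : ℕ} {Ω : Type*}

def Gge (a : ℤ → Ω → Fin q) (n : ℕ) : MeasurableSpace Ω :=
  ⨆ i : ℤ, ⨆ _ : -(n : ℤ) ≤ i, MeasurableSpace.comap (a i) inferInstance

lemma measurable_Gge {a : ℤ → Ω → Fin q} {n : ℕ} {i : ℤ} (hi : -(n : ℤ) ≤ i) :
    Measurable[Gge a n] (a i) :=
  Measurable.of_comap_le (le_iSup₂ (f := fun i (_ : -(n : ℤ) ≤ i) =>
    MeasurableSpace.comap (a i) inferInstance) i hi)

lemma indep_Gge_Glt [MeasurableSpace Ω] {P : Measure Ω} {a : ℤ → Ω → Fin q}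
    (hmeas : ∀ i, Measurable (a i)) (hindep : iIndepFun a P) (n : ℕ) :
    Indep (Gge a n) (Glt a n) P :=
  indep_iSup_of_disjoint (fun i => (hmeas i).comap_le) hindep
    (Set.disjoint_left.2 fun i (hi : -(n : ℤ) ≤ i) (hi' : i < -(n : ℤ)) => by omega)

end

/-- for a bilateral i.i.d. sequence with common distribution `μ`
supported on `[q]`, `κ = max_x μ({x})`, any event `A ∈ F₀` and any event
`B ∈ G_{<−n}` of positive probability, `|P(A | B) − P(A)| ≤ 2q·κⁿ`. -/
theorem stmt15
    {Ω : Type*} [MeasurableSpace Ω] (P : Measure Ω) [IsProbabilityMeasure P]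
    (q : ℕ) (μ : Measure (Fin q)) [IsProbabilityMeasure μ]
    (a : ℤ → Ω → Fin q)
    (hmeas : ∀ i, Measurable (a i))
    (hindep : iIndepFun a P)
    (hid : ∀ i, Measure.map (a i) P = μ)
    (n : ℕ)
    (A : Set Ω) (hA : MeasurableSet[Fge0 a] A)
    (B : Set Ω) (hB : MeasurableSet[Glt a n] B) (hBpos : 0 < P B) :
    |(P (A ∩ B)).toReal / (P B).toReal - (P A).toReal|
      ≤ 2 * q * (⨆ x : Fin q, (μ {x}).toReal) ^ n := by
  set E := ⋃ x, ⋂ i ∈ Finset.Icc (-(n : ℤ)) 0, a i ⁻¹' {x}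
  have hE : MeasurableSet[Gge a n] E :=
    .iUnion fun x => .biInter (Finset.countable_toSet _) fun i hi =>
      measurable_Gge (Finset.mem_Icc.1 hi).1 (measurableSet_singleton x)
  have hTf (k : ℕ) (ω : Ω) (hω : ω ∉ E) : Tf a k ω = Tf (fun i => a (max i (-(n : ℤ)))) k ω := by
    have hx : ∃ i, -(n : ℤ) ≤ i ∧ i ≤ 0 ∧ a i ω ≠ a 0 ω := by
      by_contra! hconst
      exact hω (Set.mem_iUnion.2 ⟨a 0 ω, Set.mem_iInter₂.2 fun i hi =>
        hconst i (Finset.mem_Icc.1 hi).1 (Finset.mem_Icc.1 hi).2⟩)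
    simp only [Tf, hasLocalMaxZ_iff_of_eqOn (y := fun i => a (max i (-(n : ℤ))) ω)
      (Int.natCast_nonneg k) (fun i hi => by simp only [max_eq_left hi]) hx]
  obtain ⟨A', hA', hAA'⟩ := exists_measurableSet_iSup_comap_sdiff_eq hTf hA
  have hA'_Gge : MeasurableSet[Gge a n] A' :=
    Fge0_le (fun i => measurable_Gge (le_max_right _ _)) A' hA'
  have indep_B {s : Set Ω} (hs : MeasurableSet[Gge a n] s) :
      P.real (s ∩ B) = P.real s * P.real B := by
    simp only [measureReal_def, (Indep_iff _ _ _).1 (indep_Gge_Glt hmeas hindep n) s B hs hB,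
      ENNReal.toReal_mul]
  have hq : (1 : ℝ) ≤ q := by exact_mod_cast (nonempty_of_isProbabilityMeasure μ).some.pos
  have hκ : 0 ≤ (⨆ x : Fin q, μ.real {x}) := Real.iSup_nonneg fun _ => measureReal_nonneg
  calc |P.real (A ∩ B) / P.real B - P.real A|
      ≤ 2 * P.real E := abs_measureReal_inter_div_sub_le hAA' (indep_B hA'_Gge) (indep_B hE)
        (ENNReal.toReal_pos hBpos.ne' (measure_ne_top P B))
    _ ≤ 2 * (⨆ x : Fin q, μ.real {x}) ^ n := by
        gcongr
        exact measureReal_iUnion_iInter_preimage_singleton_le hmeas hindep hid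
          (by rw [Int.card_Icc]; omega)
    _ ≤ 2 * q * (⨆ x : Fin q, μ.real {x}) ^ n := by
        have := pow_nonneg hκ n
        nlinarith

end
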